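/- Let T and T' be minimal G-trees with the same elliptic subgroups, with T strongly slide-free. Let f : T → T' be a G-equivariant map sending each vertex v to a vertex fixed by G_v and extended linearly on edges. Then f restricted to the vertex set of T is injective. -/
import Mathlib


open SimpleGraph

section GTree

variable (G : Type*) [Group G]

/-- The group action preserves adjacency: `G` acts on the graph by automorphisms. -/
def ActsOnGraph {V : Type*} [MulAction G V] (T : SimpleGraph V) : Prop :=
  ∀ (g : G) (u v : V), T.Adj u v → T.Adj (g • u) (g • v)

/-- The action is without inversions: no element exchanges the two endpoints of an edge. -/
def NoInversions {V : Type*} [MulAction G V] (T : SimpleGraph V) : Prop :=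
  ∀ (g : G) (u v : V), T.Adj u v → ¬(g • u = v ∧ g • v = u)

/-- A subgroup is elliptic if it fixes a vertex. -/
def IsElliptic (V : Type*) [MulAction G V] (H : Subgroup G) : Prop :=
  ∃ v : V, ∀ h ∈ H, h • v = v

/-- The stabilizer of the edge with endpoints `u`, `v` (for an action without
inversions this is the pointwise stabilizer of the edge). -/
def edgeStab {V : Type*} [MulAction G V] (u v : V) : Subgroup G :=
  MulAction.stabilizer G u ⊓ MulAction.stabilizer G v

/-- The set of vertices on the unique path between two vertices of a tree. -/
noncomputable def seg {V : Type*} {T : SimpleGraph V} (hT : T.IsTree) (x y : V) : Set V :=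
  {z | z ∈ ((hT.existsUnique_path x y).exists.choose).support}

/-- A set of vertices is a subtree if it contains the arc between any two of its points. -/
def IsSubtree {V : Type*} {T : SimpleGraph V} (hT : T.IsTree) (S : Set V) : Prop :=
  ∀ x ∈ S, ∀ y ∈ S, seg hT x y ⊆ S

/-- A set of vertices is invariant under the group action. -/
def GInvariant {V : Type*} [MulAction G V] (S : Set V) : Prop :=
  ∀ (g : G), ∀ v ∈ S, g • v ∈ S

/-- The action is minimal: there is no proper nonempty invariant subtree. -/
def MinimalAction {V : Type*} [MulAction G V] {T : SimpleGraph V} (hT : T.IsTree) : Prop :=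
  ∀ S : Set V, S.Nonempty → GInvariant G S → IsSubtree hT S → S = Set.univ

/-- Strongly slide-free: if two edges at a common vertex `v` have nested
stabilizers, they are in the same `G_v`-orbit. -/
def StronglySlideFree {V : Type*} [MulAction G V] (T : SimpleGraph V) : Prop :=
  ∀ v a b : V, T.Adj v a → T.Adj v b → edgeStab G v a ≤ edgeStab G v b →
    ∃ g ∈ MulAction.stabilizer G v, g • a = b

/-- Reduced: for every edge whose stabilizer equals the stabilizer of one of its
endpoints, the two endpoints are in the same `G`-orbit. -/
def Reduced {V : Type*} [MulAction G V] (T : SimpleGraph V) : Prop :=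
  ∀ u v : V, T.Adj u v → edgeStab G u v = MulAction.stabilizer G v → ∃ g : G, g • u = v

end GTree

section AuxLemmas

private lemma list_map_fix {α : Type*} {f : α → α} :
    ∀ (l : List α), l.map f = l → ∀ a ∈ l, f a = a := by
  intro l
  induction l with
  | nil => intro _ a ha; simp at ha
  | cons b t ih =>
    intro h a ha
    rw [List.map_cons] at h
    injection h with h1 h2
    rcases List.mem_cons.mp ha with h3 | h3
    · rw [h3]; exact h1
    · exact ih h2 a h3

/-- An element fixing both endpoints of a path in a tree fixes every vertex of the path. -/
private lemma fix_support {G V : Type*} [Group G] [MulAction G V] {T : SimpleGraph V}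
    (hT : T.IsTree) (hact : ActsOnGraph G T) {x y : V} (p : T.Walk x y) (hp : p.IsPath)
    (g : G) (hx : g • x = x) (hy : g • y = y) : ∀ z ∈ p.support, g • z = z := by
  let φ : T →g T := ⟨fun v => g • v, fun {a b} h => hact g a b h⟩
  have hinj : Function.Injective φ := MulAction.injective g
  have hp' : ((p.map φ).copy hx hy).IsPath := by
    rw [SimpleGraph.Walk.isPath_copy]
    exact SimpleGraph.Walk.map_isPath_of_injective hinj hp
  have heq : (p.map φ).copy hx hy = p := (hT.existsUnique_path x y).unique hp' hp
  have hsup : p.support.map (fun v => g • v) = p.support := by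
    have := congrArg SimpleGraph.Walk.support heq
    rwa [SimpleGraph.Walk.support_copy, SimpleGraph.Walk.support_map] at this
  exact list_map_fix _ hsup

/-- An interior vertex of a path has at least two distinct neighbors. -/
private lemma no_interior_unique_nbr {V : Type*} {T : SimpleGraph V} :
    ∀ {x y : V} (p : T.Walk x y), p.IsPath → ∀ z ∈ p.support, z ≠ x → z ≠ y →
      (∀ c₁ c₂ : V, T.Adj z c₁ → T.Adj z c₂ → c₁ = c₂) → False := by
  intro x y p
  induction p with
  | nil =>
    intro _ z hz hzx _ _
    rw [SimpleGraph.Walk.support_nil, List.mem_singleton] at hz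
    exact hzx hz
  | @cons u v w h q ih =>
    intro hp z hz hzx hzy huniq
    rw [SimpleGraph.Walk.support_cons, List.mem_cons] at hz
    rcases hz with hz | hz
    · exact hzx hz
    by_cases hzv : z = v
    · subst hzv
      cases q with
      | nil => exact hzy rfl
      | @cons _ c _ h2 q2 =>
        have hc : u = c := huniq u c h.symm h2
        have hmem : u ∈ (SimpleGraph.Walk.cons h2 q2).support := by
          rw [SimpleGraph.Walk.support_cons]
          exact List.mem_cons_of_mem _ (hc ▸ q2.start_mem_support)
        exact ((SimpleGraph.Walk.cons_isPath_iff _ _).mp hp).2 hmem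
    · exact ih ((SimpleGraph.Walk.cons_isPath_iff _ _).mp hp).1 z hz hzv hzy huniq

/-- Key lemma: in a minimal, strongly slide-free tree without inversions, no vertex
stabilizer is contained in the stabilizer of an adjacent vertex. -/
private lemma no_dominated_edge {G V : Type*} [Group G] [MulAction G V] {T : SimpleGraph V}
    (hT : T.IsTree) (hact : ActsOnGraph G T) (hni : NoInversions G T)
    (hmin : MinimalAction G hT) (hssf : StronglySlideFree G T)
    {v a : V} (hadj : T.Adj v a) (hle : MulAction.stabilizer G v ≤ MulAction.stabilizer G a) :
    False := by
  -- every neighbor of v equals a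
  have key1 : ∀ b : V, T.Adj v b → b = a := by
    intro b hb
    have hstab : edgeStab G v b ≤ edgeStab G v a :=
      le_inf inf_le_left (le_trans inf_le_left hle)
    obtain ⟨g, hg, hgba⟩ := hssf v b a hb hadj hstab
    have hginv : g⁻¹ ∈ MulAction.stabilizer G a := hle (inv_mem hg)
    calc b = g⁻¹ • (g • b) := by rw [inv_smul_smul]
    _ = g⁻¹ • a := by rw [hgba]
    _ = a := hginv
  -- translated version
  have key2 : ∀ (g : G) (c : V), T.Adj (g • v) c → c = g • a := by
    intro g c hc
    have h1 : T.Adj v (g⁻¹ • c) := by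
      have := hact g⁻¹ _ _ hc
      rwa [inv_smul_smul] at this
    have h2 : g⁻¹ • c = a := key1 _ h1
    calc c = g • (g⁻¹ • c) := by rw [smul_inv_smul]
    _ = g • a := by rw [h2]
  by_cases hmem : ∃ g : G, g • v = a
  · obtain ⟨g, hgv⟩ := hmem
    have hva : T.Adj (g • v) v := by rw [hgv]; exact hadj.symm
    have : v = g • a := key2 g v hva
    exact hni g v a hadj ⟨hgv, this.symm⟩
  · push_neg at hmem
    set S : Set V := {x : V | ∀ g : G, g • v ≠ x} with hSdef
    have hne : S.Nonempty := ⟨a, hmem⟩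
    have hinv : GInvariant G S := by
      intro g x hx g' heq
      apply hx (g⁻¹ * g')
      rw [mul_smul, heq, inv_smul_smul]
    have hsub : IsSubtree hT S := by
      intro x hx y hy z hz
      simp only [seg, Set.mem_setOf_eq] at hz
      intro g hgz
      have hzx : z ≠ x := fun h => hx g (h ▸ hgz)
      have hzy : z ≠ y := fun h => hy g (h ▸ hgz)
      refine no_interior_unique_nbr _ (hT.existsUnique_path x y).exists.choose_spec z hz hzx hzy ?_
      intro c₁ c₂ h1 h2
      rw [← hgz] at h1 h2
      rw [key2 g c₁ h1, key2 g c₂ h2]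
    have huniv := hmin S hne hinv hsub
    have hvS : v ∈ S := huniv ▸ Set.mem_univ v
    exact hvS 1 (one_smul G v)

end AuxLemmas

/-- If `T`, `T'` are minimal `G`-trees with the same elliptic subgroups, `T` is
strongly slide-free, and `f` is an equivariant map sending each vertex to a vertex
fixed by its stabilizer, then `f` is injective on vertices. -/
theorem equivariant_map_injective {G V V' : Type*} [Group G] [MulAction G V] [MulAction G V']
    {T : SimpleGraph V} {T' : SimpleGraph V'} (hT : T.IsTree) (hT' : T'.IsTree)
    (hact : ActsOnGraph G T) (hact' : ActsOnGraph G T')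
    (hni : NoInversions G T) (hni' : NoInversions G T')
    (hmin : MinimalAction G hT) (hmin' : MinimalAction G hT')
    (hell : ∀ H : Subgroup G, IsElliptic G V H ↔ IsElliptic G V' H)
    (hssf : StronglySlideFree G T)
    (f : V → V')
    (hequi : ∀ (g : G) (v : V), f (g • v) = g • f v)
    (hfixf : ∀ v : V, ∀ g ∈ MulAction.stabilizer G v, g • f v = f v) :
    Function.Injective f := by
  intro u w hfw
  -- the stabilizer of `f u` is elliptic in `T'`, hence in `T`: it fixes some `x : V`
  have hell' : IsElliptic G V' (MulAction.stabilizer G (f u)) :=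
    ⟨f u, fun h hh => MulAction.mem_stabilizer_iff.mp hh⟩
  obtain ⟨x, hxfix⟩ := (hell _).mpr hell'
  -- any vertex whose stabilizer is contained in the stabilizer of `f u` equals `x`
  have key : ∀ v0 : V, MulAction.stabilizer G v0 ≤ MulAction.stabilizer G (f u) → v0 = x := by
    intro v0 hle0
    by_contra hne
    obtain ⟨p, hp⟩ := (hT.existsUnique_path v0 x).exists
    cases p with
    | nil => exact hne rfl
    | @cons _ b _ h q =>
      have hble : MulAction.stabilizer G v0 ≤ MulAction.stabilizer G b := by
        intro k hk
        have hkv : k • v0 = v0 := MulAction.mem_stabilizer_iff.mp hk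
        have hkx : k • x = x := hxfix k (hle0 hk)
        have := fix_support hT hact (SimpleGraph.Walk.cons h q) hp k hkv hkx
        exact this b (by
          rw [SimpleGraph.Walk.support_cons]
          exact List.mem_cons_of_mem _ q.start_mem_support)
      exact no_dominated_edge hT hact hni hmin hssf h hble
  have hu : u = x := key u (fun k hk => MulAction.mem_stabilizer_iff.mpr (hfixf u k hk))
  have hw : w = x := key w (fun k hk => by
    have : k • f w = f w := hfixf w k hk
    rw [MulAction.mem_stabilizer_iff, hfw]
    exact this)
  rw [hu, hw]
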